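/- Let \(\mathcal{F}\) be an \(\ell\)-shifted intersecting family of k-element subsets of [n]. If \(A, B \in \mathcal{F}\) satisfy \(A \cap B \cap [\ell] = \emptyset\), then \(|A \cap [\ell]| + |B \cap [\ell]| + |A \cap B| \ge \ell + 1\). -/

import Mathlib

open Finset

/-- The (i,j)-shift of a single set with respect to a family. -/
def shiftSet (F : Finset (Finset ℕ)) (i j : ℕ) (A : Finset ℕ) : Finset ℕ :=
  if i ∈ A ∧ j ∉ A ∧ (insert j A).erase i ∉ F then (insert j A).erase i else A

/-- The (i,j)-shift of a family. -/
def shiftFam (F : Finset (Finset ℕ)) (i j : ℕ) : Finset (Finset ℕ) :=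
  F.image (shiftSet F i j)

/-- A family is intersecting if any two members meet. -/
def IntersectingFam (F : Finset (Finset ℕ)) : Prop :=
  ∀ A ∈ F, ∀ B ∈ F, (A ∩ B).Nonempty

/-- A family is t-intersecting if any two members share at least t elements. -/
def TIntersecting (t : ℕ) (F : Finset (Finset ℕ)) : Prop :=
  ∀ A ∈ F, ∀ B ∈ F, t ≤ (A ∩ B).card

/-- A family on [n] is ℓ-shifted if it is invariant under all (i,j)-shifts with
    i ∈ [n] \ [ℓ] and j ∈ [ℓ]. -/
def IsShifted (ℓ n : ℕ) (F : Finset (Finset ℕ)) : Prop :=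
  ∀ i ∈ Icc 1 n, ∀ j ∈ Icc 1 ℓ, i ∉ Icc 1 ℓ → shiftFam F i j = F

/-- The degree of an element in a family. -/
def deg (F : Finset (Finset ℕ)) (i : ℕ) : ℕ := (F.filter (fun A => i ∈ A)).card

/-!
Suppose `|A ∩ B| ≤ |[ℓ] \ (A ∪ B)|`. Every `i ∈ A ∩ B` lies outside `[ℓ]`, so shifting `i` to some
`j ∈ [ℓ] \ (A ∪ B)` keeps `A` in the shifted family while removing `i` from `A ∩ B` and `j` from
`[ℓ] \ (A ∪ B)`. Iterating produces a member of `F` disjoint from `B`, contradicting that `F` is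
intersecting. Since `A ∩ [ℓ]` and `B ∩ [ℓ]` are disjoint, `|[ℓ] \ (A ∪ B)| + |A ∩ [ℓ]| + |B ∩ [ℓ]| = ℓ`,
which turns `|[ℓ] \ (A ∪ B)| < |A ∩ B|` into the claimed inequality.
-/

section

variable {α : Type*} [DecidableEq α]

lemma erase_insert_inter_of_notMem {A B : Finset α} {i j : α} (hj : j ∉ B) :
    (insert j A).erase i ∩ B = (A ∩ B).erase i := by
  ext x
  simp only [mem_inter, mem_erase, mem_insert]
  constructor
  · rintro ⟨⟨hxi, rfl | hxA⟩, hxB⟩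
    · exact absurd hxB hj
    · exact ⟨hxi, hxA, hxB⟩
  · rintro ⟨hxi, hxA, hxB⟩
    exact ⟨⟨hxi, Or.inr hxA⟩, hxB⟩

lemma sdiff_erase_insert_union_of_notMem {s A B : Finset α} {i j : α} (hi : i ∉ s) :
    s \ ((insert j A).erase i ∪ B) = (s \ (A ∪ B)).erase j := by
  ext x
  by_cases hxs : x ∈ s
  · have hxi : x ≠ i := ne_of_mem_of_not_mem hxs hi
    simp only [mem_sdiff, mem_erase, mem_union, mem_insert, hxs, true_and]
    tauto
  · simp [hxs]

lemma card_sdiff_union_add_card_inter_add_card_inter {s A B : Finset α}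
    (hdisj : Disjoint (A ∩ B) s) :
    #(s \ (A ∪ B)) + #(A ∩ s) + #(B ∩ s) = #s := by
  have hAB : Disjoint (A ∩ s) (B ∩ s) := by
    rwa [disjoint_iff_inter_eq_empty, inter_inter_inter_comm, inter_self,
      ← disjoint_iff_inter_eq_empty]
  rw [add_assoc, ← card_union_of_disjoint hAB, ← union_inter_distrib_right, inter_comm,
    card_sdiff_add_card_inter]

end

lemma erase_insert_mem_of_shiftFam_eq {F : Finset (Finset ℕ)} {i j : ℕ} (h : shiftFam F i j = F)
    {A : Finset ℕ} (hA : A ∈ F) (hi : i ∈ A) (hj : j ∉ A) :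
    (insert j A).erase i ∈ F := by
  by_contra hA'
  have hshift : shiftSet F i j A = (insert j A).erase i := if_pos ⟨hi, hj, hA'⟩
  exact hA' (h ▸ hshift ▸ mem_image_of_mem _ hA)

lemma card_sdiff_union_lt_card_inter {n ℓ : ℕ} {F : Finset (Finset ℕ)}
    (hsh : IsShifted ℓ n F) (hint : IntersectingFam F) {B : Finset ℕ} (hB : B ∈ F)
    (hBn : B ⊆ Icc 1 n) {A : Finset ℕ} (hA : A ∈ F) (hdisj : Disjoint (A ∩ B) (Icc 1 ℓ)) :
    #(Icc 1 ℓ \ (A ∪ B)) < #(A ∩ B) := by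
  induction hm : #(A ∩ B) generalizing A with
  | zero => exact absurd (card_eq_zero.mp hm ▸ hint A hA B hB) (by simp)
  | succ m ih =>
    obtain hempty | ⟨j, hj⟩ := (Icc 1 ℓ \ (A ∪ B)).eq_empty_or_nonempty
    · simp [hempty]
    obtain ⟨i, hi⟩ := card_pos.mp (by omega : 0 < #(A ∩ B))
    obtain ⟨hjℓ, hjAB⟩ := mem_sdiff.mp hj
    rw [mem_union, not_or] at hjAB
    have hiℓ : i ∉ Icc 1 ℓ := disjoint_left.mp hdisj hi
    have hinter : (insert j A).erase i ∩ B = (A ∩ B).erase i :=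
      erase_insert_inter_of_notMem hjAB.2
    have hA' : (insert j A).erase i ∈ F :=
      erase_insert_mem_of_shiftFam_eq (hsh i (hBn (mem_inter.mp hi).2) j hjℓ hiℓ) hA
        (mem_inter.mp hi).1 hjAB.1
    have hlt := ih hA' (hinter ▸ hdisj.mono_left (erase_subset _ _))
      (by rw [hinter, card_erase_of_mem hi, hm]; rfl)
    rw [sdiff_erase_insert_union_of_notMem hiℓ, card_erase_of_mem hj] at hlt
    omega

theorem stmt6_general (n ℓ : ℕ) (F : Finset (Finset ℕ))
    (hF : ∀ A ∈ F, A ⊆ Icc 1 n)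
    (hsh : IsShifted ℓ n F) (hint : IntersectingFam F)
    (A B : Finset ℕ) (hA : A ∈ F) (hB : B ∈ F)
    (hdisj : A ∩ B ∩ Icc 1 ℓ = ∅) :
    ℓ + 1 ≤ (A ∩ Icc 1 ℓ).card + (B ∩ Icc 1 ℓ).card + (A ∩ B).card := by
  have hdisj' : Disjoint (A ∩ B) (Icc 1 ℓ) := disjoint_iff_inter_eq_empty.mpr hdisj
  have hcount := card_sdiff_union_add_card_inter_add_card_inter hdisj'
  have hlt := card_sdiff_union_lt_card_inter hsh hint hB (hF B hB) hA hdisj'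
  rw [Nat.card_Icc, Nat.add_sub_cancel] at hcount
  omega

theorem stmt6 (n k ℓ : ℕ) (F : Finset (Finset ℕ))
    (hF : ∀ A ∈ F, A ⊆ Icc 1 n) (hunif : ∀ A ∈ F, A.card = k)
    (hsh : IsShifted ℓ n F) (hint : IntersectingFam F)
    (A B : Finset ℕ) (hA : A ∈ F) (hB : B ∈ F)
    (hdisj : A ∩ B ∩ Icc 1 ℓ = ∅) :
    ℓ + 1 ≤ (A ∩ Icc 1 ℓ).card + (B ∩ Icc 1 ℓ).card + (A ∩ B).card :=
  stmt6_general n ℓ F hF hsh hint A B hA hB hdisj
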